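/- arXiv:2502.02450 — 4 statements merged into one kernel-verified Lean document; each statement's English description precedes it below -/
import Mathlib

section
/- Let n, m be finite index types, let P be an n×n positive-definite real matrix, R an m×m positive-definite real matrix, H an m×n real matrix, and let m₀ ∈ ℝⁿ, v ∈ ℝᵐ. Set Λ := P⁻¹ + Hᵀ R⁻¹ H (which is positive definite, hence invertible) and μ := Λ⁻¹ (P⁻¹ m₀ + Hᵀ v). Then for every z ∈ ℝⁿ, exp(−(1/2)·(z − m₀)ᵀ P⁻¹ (z − m₀)) · exp(−(1/2)·((H z)ᵀ R⁻¹ (H z) − 2 (H z)ᵀ v)) = exp((1/2)·μᵀ Λ μ − (1/2)·m₀ᵀ P⁻¹ m₀) · exp(−(1/2)·(z − μ)ᵀ Λ (z − μ)). In other words, the generalised Bayes update of a Gaussian density by the exponential of a quadratic loss is (up to a constant independent of z) again a Gaussian density with precision Λ and mean μ. -/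
/-!
Expanding the exponent on the left, the quadratic part in `z` is `zᵀ (P⁻¹ + HᵀR⁻¹H) z = zᵀ Λ z`
and the linear part is `-2 zᵀ (P⁻¹m₀ + Hᵀv) = -2 zᵀ Λ μ`. Completing the square with respect to
the symmetric matrix `Λ` turns `zᵀΛz - 2 zᵀΛμ` into `(z - μ)ᵀΛ(z - μ) - μᵀΛμ`, which is the
exponent on the right. `Λ` is positive definite as the sum of the positive-definite `P⁻¹` and
the positive-semidefinite congruence `HᵀR⁻¹H` of `R⁻¹`.
-/

open Matrix

namespace Matrix

section CommRing

variable {n m α : Type*} [Fintype n] [Fintype m] [CommRing α]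

theorem sub_dotProduct_mulVec_sub {A : Matrix n n α} (hA : A.IsSymm) (x y : n → α) :
    (x - y) ⬝ᵥ A *ᵥ (x - y) = x ⬝ᵥ A *ᵥ x - 2 * (x ⬝ᵥ A *ᵥ y) + y ⬝ᵥ A *ᵥ y := by
  have hyx : y ⬝ᵥ A *ᵥ x = x ⬝ᵥ A *ᵥ y := by
    simpa only [hA.eq] using dotProduct_transpose_mulVec A y x
  simp only [mulVec_sub, sub_dotProduct, dotProduct_sub, hyx]
  ring

theorem mulVec_dotProduct_mulVec_mulVec (H : Matrix m n α) (A : Matrix m m α) (x : n → α) :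
    H *ᵥ x ⬝ᵥ A *ᵥ (H *ᵥ x) = x ⬝ᵥ (Hᵀ * A * H) *ᵥ x := by
  rw [← mulVec_mulVec, ← mulVec_mulVec, dotProduct_mulVec x, vecMul_transpose]

theorem sub_dotProduct_mulVec_sub_add_quadratic_eq {P Λ : Matrix n n α} {S : Matrix m m α}
    {H : Matrix m n α} (hP : P.IsSymm) (hΛ : Λ.IsSymm) (hΛeq : Λ = P + Hᵀ * S * H)
    {m₀ μ : n → α} {v : m → α} (hμ : Λ *ᵥ μ = P *ᵥ m₀ + Hᵀ *ᵥ v) (z : n → α) :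
    (z - m₀) ⬝ᵥ P *ᵥ (z - m₀) + (H *ᵥ z ⬝ᵥ S *ᵥ (H *ᵥ z) - 2 * (H *ᵥ z ⬝ᵥ v)) =
      (z - μ) ⬝ᵥ Λ *ᵥ (z - μ) - μ ⬝ᵥ Λ *ᵥ μ + m₀ ⬝ᵥ P *ᵥ m₀ := by
  have hquad : z ⬝ᵥ Λ *ᵥ z = z ⬝ᵥ P *ᵥ z + H *ᵥ z ⬝ᵥ S *ᵥ (H *ᵥ z) := by
    rw [hΛeq, add_mulVec, dotProduct_add, mulVec_dotProduct_mulVec_mulVec]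
  have hlin : z ⬝ᵥ Λ *ᵥ μ = z ⬝ᵥ P *ᵥ m₀ + H *ᵥ z ⬝ᵥ v := by
    rw [hμ, dotProduct_add, dotProduct_mulVec z Hᵀ, vecMul_transpose]
  rw [sub_dotProduct_mulVec_sub hP, sub_dotProduct_mulVec_sub hΛ, hquad, hlin]
  ring

end CommRing

theorem PosDef.inv_add_transpose_mul_inv_mul {n m : Type*} [Fintype n] [Fintype m]
    [DecidableEq n] [DecidableEq m] {P : Matrix n n ℝ} (hP : P.PosDef) {R : Matrix m m ℝ}
    (hR : R.PosDef) (H : Matrix m n ℝ) : (P⁻¹ + Hᵀ * R⁻¹ * H).PosDef := by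
  have hHRH : (Hᵀ * R⁻¹ * H).PosSemidef := by
    simpa only [conjTranspose_eq_transpose_of_trivial] using
      hR.inv.posSemidef.conjTranspose_mul_mul_same H
  exact hP.inv.add_posSemidef hHRH

end Matrix

/-- **Generalised-Bayes Gaussian update (Proposition 3.1 core computation).**
Updating a Gaussian density with precision `P⁻¹` and mean `m₀` by the exponential of the
quadratic loss `(1/2)((Hz)ᵀR⁻¹(Hz) − 2(Hz)ᵀv)` yields, up to a constant independent of `z`,
a Gaussian density with precision `Λ = P⁻¹ + HᵀR⁻¹H` and mean `μ = Λ⁻¹(P⁻¹m₀ + Hᵀv)`. -/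
theorem stmt0 {n m : Type*} [Fintype n] [Fintype m] [DecidableEq n] [DecidableEq m]
    (P : Matrix n n ℝ) (hP : P.PosDef) (R : Matrix m m ℝ) (hR : R.PosDef)
    (H : Matrix m n ℝ) (m₀ : n → ℝ) (v : m → ℝ)
    (Λ : Matrix n n ℝ) (hΛ : Λ = P⁻¹ + Hᵀ * R⁻¹ * H)
    (μ : n → ℝ) (hμ : μ = Λ⁻¹.mulVec (P⁻¹.mulVec m₀ + Hᵀ.mulVec v)) :
    Λ.PosDef ∧ IsUnit Λ.det ∧
    ∀ z : n → ℝ,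
      Real.exp (-(1/2) * ((z - m₀) ⬝ᵥ P⁻¹.mulVec (z - m₀))) *
        Real.exp (-(1/2) * ((H.mulVec z) ⬝ᵥ R⁻¹.mulVec (H.mulVec z)
            - 2 * ((H.mulVec z) ⬝ᵥ v))) =
      Real.exp ((1/2) * (μ ⬝ᵥ Λ.mulVec μ) - (1/2) * (m₀ ⬝ᵥ P⁻¹.mulVec m₀)) *
        Real.exp (-(1/2) * ((z - μ) ⬝ᵥ Λ.mulVec (z - μ))) := by
  have hΛpd : Λ.PosDef := hΛ ▸ hP.inv_add_transpose_mul_inv_mul hR H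
  have hdet : IsUnit Λ.det := hΛpd.det_pos.ne'.isUnit
  have hΛμ : Λ *ᵥ μ = P⁻¹ *ᵥ m₀ + Hᵀ *ᵥ v := by
    rw [hμ, mulVec_mulVec, mul_nonsing_inv Λ hdet, one_mulVec]
  refine ⟨hΛpd, hdet, fun z => ?_⟩
  have hexp := sub_dotProduct_mulVec_sub_add_quadratic_eq
    (isHermitian_iff_isSymm.mp hP.inv.isHermitian) (isHermitian_iff_isSymm.mp hΛpd.isHermitian)
    hΛ hΛμ z
  rw [← Real.exp_add, ← Real.exp_add]
  congr 1
  linear_combination (-1 / 2 : ℝ) * hexp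
end

section
/- Let n, m be finite index types, let P be an n×n positive-definite real matrix, H an m×n real matrix, m₀ ∈ ℝⁿ, σ > 0, and for a positive-definite d×d matrix Σ and vectors x, μ ∈ ℝᵈ write N(x; μ, Σ) := (det(2π Σ))^(−1/2) · exp(−(1/2)(x − μ)ᵀ Σ⁻¹ (x − μ)). Then for every y ∈ ℝᵐ, ∫_{ℝⁿ} N(y; H z, σ² Iₘ) · N(z; m₀, P) dz = N(y; H m₀, H P Hᵀ + σ² Iₘ), where Iₘ is the m×m identity matrix and the integral is with respect to Lebesgue measure on ℝⁿ. -/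
open Matrix MeasureTheory

/-- The multivariate Gaussian density `N(x; μ, Σ) = det(2πΣ)^{-1/2} exp(−½(x−μ)ᵀΣ⁻¹(x−μ))`. -/
noncomputable def gaussianDensityN {d : Type*} [Fintype d] [DecidableEq d]
    (x μ : d → ℝ) (S : Matrix d d ℝ) : ℝ :=
  (((2 * Real.pi) • S).det) ^ (-(1 : ℝ) / 2) *
    Real.exp (-(1 / 2) * ((x - μ) ⬝ᵥ S⁻¹.mulVec (x - μ)))

/-!
Substitute `z = m₀ + w` and put `r = y - H m₀`. The exponent of the integrand is then
`-(1/2) σ⁻² |r|² + bᵀ w - (1/2) wᵀ A w` with the posterior precision `A = P⁻¹ + σ⁻² HᵀH`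
and `b = σ⁻² Hᵀ r`, so completing the square (after a Cholesky-type change of variables
`A = BᵀB`) gives the integral `det(A / 2π)^(-1/2) exp((1/2) bᵀ A⁻¹ b)` times the prefactors.
The matrix determinant lemma `det(HPHᵀ + σ²I) = σ^(2m) det P det A` and the Woodbury identity
`rᵀ (HPHᵀ + σ²I)⁻¹ r = σ⁻² |r|² - bᵀ A⁻¹ b` turn this into `N(y; H m₀, HPHᵀ + σ²I)`.
-/

open Real
open scoped MatrixOrder

namespace Matrix

variable {n m : Type*} [Fintype n] [Fintype m]

theorem sub_mulVec_dotProduct_sub_mulVec {R : Type*} [CommRing R] (H : Matrix m n R)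
    (r : m → R) (w : n → R) :
    (r - H *ᵥ w) ⬝ᵥ (r - H *ᵥ w) = r ⬝ᵥ r - 2 * (Hᵀ *ᵥ r ⬝ᵥ w) + w ⬝ᵥ (Hᵀ * H) *ᵥ w := by
  have hcross : H *ᵥ w ⬝ᵥ r = Hᵀ *ᵥ r ⬝ᵥ w := by
    rw [dotProduct_comm, dotProduct_mulVec, ← mulVec_transpose]
  have hsq : H *ᵥ w ⬝ᵥ H *ᵥ w = w ⬝ᵥ (Hᵀ * H) *ᵥ w := by
    rw [← mulVec_mulVec, dotProduct_mulVec w, vecMul_transpose, dotProduct_comm]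
  simp only [sub_dotProduct, dotProduct_sub, hcross, dotProduct_comm r (H *ᵥ w), hsq]
  ring

variable [DecidableEq n] [DecidableEq m] {K : Type*} [Field K]

theorem inv_smul_one {c : K} (hc : c ≠ 0) : (c • (1 : Matrix m m K))⁻¹ = c⁻¹ • 1 := by
  refine inv_eq_right_inv ?_
  rw [smul_mul_smul_comm, mul_inv_cancel₀ hc, one_mul, one_smul]

theorem inv_mul_mul_transpose_add_smul_one (H : Matrix m n K) {P : Matrix n n K} {c : K}
    (hP : IsUnit P.det) (hc : c ≠ 0) (hA : IsUnit (P⁻¹ + c⁻¹ • (Hᵀ * H)).det) :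
    (H * P * Hᵀ + c • 1)⁻¹ = c⁻¹ • 1 - c⁻¹ ^ 2 • (H * (P⁻¹ + c⁻¹ • (Hᵀ * H))⁻¹ * Hᵀ) := by
  have hc1 : IsUnit (c • (1 : Matrix m m K)) := by
    rw [isUnit_iff_isUnit_det, det_smul, det_one, mul_one]
    exact (isUnit_iff_ne_zero.mpr hc).pow _
  have hHcH : Hᵀ * (c • (1 : Matrix m m K))⁻¹ * H = c⁻¹ • (Hᵀ * H) := by
    rw [inv_smul_one hc, Matrix.mul_smul, Matrix.mul_one, Matrix.smul_mul]
  rw [add_comm, add_mul_mul_inv_eq_sub _ _ _ _ hc1 ((isUnit_iff_isUnit_det _).mpr hP)]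
  · simp only [inv_smul_one hc, Matrix.smul_mul, Matrix.mul_smul, Matrix.one_mul,
      Matrix.mul_one, smul_smul, sq]
  · rw [hHcH]
    exact (isUnit_iff_isUnit_det _).mpr hA

theorem det_mul_mul_transpose_add_smul_one (H : Matrix m n K) {P : Matrix n n K} {c : K}
    (hP : IsUnit P.det) (hc : c ≠ 0) :
    (H * P * Hᵀ + c • 1).det = c ^ Fintype.card m * P.det * (P⁻¹ + c⁻¹ • (Hᵀ * H)).det := by
  have hc1 : IsUnit (c • (1 : Matrix m m K)).det := by
    rw [det_smul, det_one, mul_one]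
    exact (isUnit_iff_ne_zero.mpr hc).pow _
  have hfactor : 1 + P * Hᵀ * (c • (1 : Matrix m m K))⁻¹ * H = P * (P⁻¹ + c⁻¹ • (Hᵀ * H)) := by
    simp only [inv_smul_one hc, Matrix.mul_add, mul_nonsing_inv _ hP, Matrix.mul_smul,
      Matrix.smul_mul, Matrix.mul_one, Matrix.mul_assoc]
  rw [add_comm, Matrix.mul_assoc H, det_add_mul _ _ hc1, hfactor, det_mul,
    det_smul, det_one]
  ring

theorem det_smul_mul_mul_transpose_add_smul_one (H : Matrix m n K) {P : Matrix n n K} {c s : K}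
    (hP : IsUnit P.det) (hc : c ≠ 0) (hs : s ≠ 0) :
    (s • (H * P * Hᵀ + c • 1)).det =
      (s • c • (1 : Matrix m m K)).det * (s • P).det * (s⁻¹ • (P⁻¹ + c⁻¹ • (Hᵀ * H))).det := by
  simp only [det_smul, det_mul_mul_transpose_add_smul_one H hP hc, det_one, inv_pow]
  field_simp

theorem dotProduct_inv_mul_mul_transpose_add_smul_one_mulVec (H : Matrix m n K)
    {P : Matrix n n K} {c : K} (hP : IsUnit P.det) (hc : c ≠ 0)
    (hA : IsUnit (P⁻¹ + c⁻¹ • (Hᵀ * H)).det) (r : m → K) :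
    r ⬝ᵥ (H * P * Hᵀ + c • 1)⁻¹ *ᵥ r =
      c⁻¹ * (r ⬝ᵥ r) - c⁻¹ • Hᵀ *ᵥ r ⬝ᵥ (P⁻¹ + c⁻¹ • (Hᵀ * H))⁻¹ *ᵥ (c⁻¹ • Hᵀ *ᵥ r) := by
  rw [inv_mul_mul_transpose_add_smul_one H hP hc hA, sub_mulVec, smul_mulVec, smul_mulVec,
    one_mulVec, ← mulVec_mulVec, ← mulVec_mulVec, dotProduct_sub, dotProduct_smul,
    dotProduct_smul, dotProduct_mulVec r H, ← mulVec_transpose, mulVec_smul, smul_dotProduct,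
    dotProduct_smul]
  simp only [smul_eq_mul]
  ring

end Matrix

section GaussianIntegral

variable {n : Type*} [Fintype n]

theorem integral_exp_neg_half_dotProduct_self :
    ∫ z : n → ℝ, exp (-(1 / 2) * (z ⬝ᵥ z)) = √(2 * π) ^ Fintype.card n := by
  have hprod (z : n → ℝ) : exp (-(1 / 2) * (z ⬝ᵥ z)) = ∏ i, exp (-(1 / 2) * z i ^ 2) := by
    simp only [← exp_sum, dotProduct, Finset.mul_sum, sq]
  simp_rw [hprod]
  rw [volume_pi, integral_fintype_prod_eq_pow (fun x : ℝ ↦ exp (-(1 / 2) * x ^ 2)),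
    integral_gaussian]
  norm_num [div_div_eq_mul_div, mul_comm]

variable [DecidableEq n]

theorem integral_comp_mulVec {E : Type*} [NormedAddCommGroup E] [NormedSpace ℝ E]
    {C : Matrix n n ℝ} (hC : C.det ≠ 0) (g : (n → ℝ) → E) :
    ∫ z, g (C *ᵥ z) = |C.det|⁻¹ • ∫ z, g z := by
  have hdet : LinearMap.det (toLin' C) ≠ 0 := by rwa [LinearMap.det_toLin']
  let e := ((toLin' C).equivOfDetNeZero hdet).toContinuousLinearEquiv
  calc ∫ z, g (C *ᵥ z)
      = ∫ z, g z ∂(Measure.map (toLin' C) volume) :=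
        (e.toHomeomorph.measurableEmbedding.integral_map g).symm
    _ = |C.det|⁻¹ • ∫ z, g z := by
        rw [Measure.map_linearMap_addHaar_pi_eq_smul_addHaar hdet, integral_smul_measure,
          LinearMap.det_toLin', ENNReal.toReal_ofReal (abs_nonneg _), abs_inv]

theorem integral_exp_neg_half_dotProduct_mulVec {A : Matrix n n ℝ} (hA : A.PosDef) :
    ∫ z : n → ℝ, exp (-(1 / 2) * (z ⬝ᵥ A *ᵥ z)) = ((2 * π)⁻¹ • A).det ^ (-(1 : ℝ) / 2) := by
  obtain ⟨B, rfl⟩ := CStarAlgebra.nonneg_iff_eq_star_mul_self.mp hA.posSemidef.nonneg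
  have hdetA : (star B * B).det = B.det ^ 2 := by
    rw [det_mul, star_eq_conjTranspose, det_conjTranspose, star_trivial, sq]
  have hB : B.det ≠ 0 := fun h ↦ hA.det_pos.ne' (by rw [hdetA, h]; ring)
  have hquad (z : n → ℝ) : z ⬝ᵥ (star B * B) *ᵥ z = B *ᵥ z ⬝ᵥ B *ᵥ z := by
    rw [← mulVec_mulVec, dotProduct_mulVec, star_eq_conjTranspose,
      conjTranspose_eq_transpose_of_trivial, vecMul_transpose]
  have h2π : 0 < 2 * π := by positivity
  have hpow : ((2 * π)⁻¹ ^ Fintype.card n) ^ (-1 / 2 : ℝ) = √(2 * π) ^ Fintype.card n := by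
    rw [inv_pow, ← rpow_natCast, ← rpow_neg h2π.le, ← rpow_mul h2π.le, sqrt_eq_rpow,
      ← rpow_natCast, ← rpow_mul h2π.le]
    ring_nf
  have habs : (B.det ^ 2) ^ (-1 / 2 : ℝ) = |B.det|⁻¹ := by
    rw [neg_div, rpow_neg (sq_nonneg _), ← sqrt_eq_rpow, sqrt_sq_eq_abs]
  simp_rw [hquad]
  rw [integral_comp_mulVec hB (fun u ↦ exp (-(1 / 2) * (u ⬝ᵥ u))),
    integral_exp_neg_half_dotProduct_self, det_smul, hdetA, smul_eq_mul,
    mul_rpow (by positivity) (sq_nonneg _), hpow, habs, mul_comm]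

theorem integral_exp_neg_half_dotProduct_mulVec_add_dotProduct {A : Matrix n n ℝ}
    (hA : A.PosDef) (b : n → ℝ) :
    ∫ z : n → ℝ, exp (-(1 / 2) * (z ⬝ᵥ A *ᵥ z) + b ⬝ᵥ z) =
      ((2 * π)⁻¹ • A).det ^ (-(1 : ℝ) / 2) * exp (1 / 2 * (b ⬝ᵥ A⁻¹ *ᵥ b)) := by
  set μ := A⁻¹ *ᵥ b
  have hAμ : A *ᵥ μ = b := by
    rw [mulVec_mulVec, mul_nonsing_inv _ (isUnit_iff_ne_zero.mpr hA.det_pos.ne'), one_mulVec]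
  have hsymm : Aᵀ = A := hA.isHermitian
  have hsquare (z : n → ℝ) : -(1 / 2) * (z ⬝ᵥ A *ᵥ z) + b ⬝ᵥ z =
      -(1 / 2) * ((z - μ) ⬝ᵥ A *ᵥ (z - μ)) + 1 / 2 * (b ⬝ᵥ A⁻¹ *ᵥ b) := by
    have hcross : μ ⬝ᵥ A *ᵥ z = b ⬝ᵥ z := by
      rw [dotProduct_mulVec, ← mulVec_transpose, hsymm, hAμ]
    simp only [mulVec_sub, dotProduct_sub, sub_dotProduct, hcross, hAμ, dotProduct_comm z b,
      dotProduct_comm μ b]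
    ring
  simp_rw [hsquare, exp_add]
  rw [integral_mul_const, integral_sub_right_eq_self (fun w ↦ exp (-(1 / 2) * (w ⬝ᵥ A *ᵥ w))),
    integral_exp_neg_half_dotProduct_mulVec hA]

end GaussianIntegral

theorem gaussianDensityN_smul_one_mul_gaussianDensityN {n m : Type*} [Fintype n] [Fintype m]
    [DecidableEq n] [DecidableEq m] (P : Matrix n n ℝ) (H : Matrix m n ℝ) {c : ℝ} (hc : c ≠ 0)
    (y : m → ℝ) (m₀ z : n → ℝ) :
    gaussianDensityN y (H *ᵥ z) (c • 1) * gaussianDensityN z m₀ P =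
      ((2 * π) • c • (1 : Matrix m m ℝ)).det ^ (-(1 : ℝ) / 2) *
        ((2 * π) • P).det ^ (-(1 : ℝ) / 2) *
        exp (-(1 / 2) * (c⁻¹ * ((y - H *ᵥ m₀) ⬝ᵥ (y - H *ᵥ m₀)))) *
        exp (-(1 / 2) * ((z - m₀) ⬝ᵥ (P⁻¹ + c⁻¹ • (Hᵀ * H)) *ᵥ (z - m₀)) +
          c⁻¹ • Hᵀ *ᵥ (y - H *ᵥ m₀) ⬝ᵥ (z - m₀)) := by
  have hresidual : y - H *ᵥ z = (y - H *ᵥ m₀) - H *ᵥ (z - m₀) := by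
    rw [mulVec_sub]
    abel
  unfold gaussianDensityN
  rw [inv_smul_one hc, hresidual, smul_mulVec, one_mulVec, dotProduct_smul, smul_eq_mul,
    sub_mulVec_dotProduct_sub_mulVec, mul_mul_mul_comm, ← exp_add, mul_assoc _ (exp _),
    ← exp_add]
  congr 2
  simp only [add_mulVec, smul_mulVec, dotProduct_add, dotProduct_smul, smul_dotProduct,
    smul_eq_mul]
  ring

/-- **Closed-form one-step-ahead predictive (Proposition 3.1).**
`∫ N(y; Hz, σ²I) N(z; m₀, P) dz = N(y; Hm₀, HPHᵀ + σ²I)`. -/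
theorem stmt1 {n m : Type*} [Fintype n] [Fintype m] [DecidableEq n] [DecidableEq m]
    (P : Matrix n n ℝ) (hP : P.PosDef) (H : Matrix m n ℝ) (m₀ : n → ℝ)
    (σ : ℝ) (hσ : 0 < σ) (y : m → ℝ) :
    ∫ z : n → ℝ,
        gaussianDensityN y (H.mulVec z) (σ ^ 2 • (1 : Matrix m m ℝ)) *
          gaussianDensityN z m₀ P =
      gaussianDensityN y (H.mulVec m₀) (H * P * Hᵀ + σ ^ 2 • (1 : Matrix m m ℝ)) := by
  have hc : 0 < σ ^ 2 := by positivity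
  have h2π : 0 < 2 * π := by positivity
  set A := P⁻¹ + (σ ^ 2)⁻¹ • (Hᵀ * H)
  have hA : A.PosDef := hP.inv.add_posSemidef <| by
    simpa using (posSemidef_conjTranspose_mul_self H).smul (inv_nonneg.mpr hc.le)
  set b := (σ ^ 2)⁻¹ • Hᵀ *ᵥ (y - H *ᵥ m₀)
  simp_rw [gaussianDensityN_smul_one_mul_gaussianDensityN P H hc.ne' y m₀]
  rw [integral_const_mul,
    integral_sub_right_eq_self (fun w ↦ exp (-(1 / 2) * (w ⬝ᵥ A *ᵥ w) + b ⬝ᵥ w)) m₀,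
    integral_exp_neg_half_dotProduct_mulVec_add_dotProduct hA]
  unfold gaussianDensityN
  have hnoise := (((PosDef.one : (1 : Matrix m m ℝ).PosDef).smul hc).smul h2π).det_pos.le
  have hprior := (hP.smul h2π).det_pos.le
  have hposterior := (hA.smul (inv_pos.mpr h2π)).det_pos.le
  rw [dotProduct_inv_mul_mul_transpose_add_smul_one_mulVec H hP.det_pos.ne'.isUnit hc.ne'
      hA.det_pos.ne'.isUnit,
    det_smul_mul_mul_transpose_add_smul_one H hP.det_pos.ne'.isUnit hc.ne' h2π.ne',
    mul_rpow (mul_nonneg hnoise hprior) hposterior, mul_rpow hnoise hprior,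
    show ∀ X Y : ℝ, -(1 / 2) * (X - Y) = -(1 / 2) * X + 1 / 2 * Y from fun _ _ ↦ by ring, exp_add]
  ring
end

section
/- Let n be a finite index type and let F, Σ, G be n×n real matrices with F·Σ + Σ·Fᵀ + G = 0 (the continuous Lyapunov equation). Then for every Δ ≥ 0, ∫₀^Δ exp((Δ − τ)·F) · G · exp((Δ − τ)·Fᵀ) dτ = Σ − exp(Δ·F) · Σ · exp(Δ·Fᵀ), where exp denotes the matrix exponential and the integral is the (entrywise) interval integral over τ ∈ [0, Δ]. -/
/-!
The map `t ↦ exp(tA) S exp(tB)` has derivative `exp(tA) (AS + SB) exp(tB)`, so the fundamental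
theorem of calculus integrates `exp(tA) (AS + SB) exp(tB)` in closed form. With `A = F`, `B = Fᵀ`
the Lyapunov equation turns `AS + SB` into `-G`, and the substitution `u = Δ - τ` does the rest.
-/

open Matrix

section BanachAlgebra

variable {𝔸 : Type*} [NormedRing 𝔸] [NormedAlgebra ℝ 𝔸] [CompleteSpace 𝔸]

theorem hasDerivAt_exp_smul_mul_mul_exp_smul (A B S : 𝔸) (t : ℝ) :
    HasDerivAt (fun t : ℝ => NormedSpace.exp (t • A) * S * NormedSpace.exp (t • B))
      (NormedSpace.exp (t • A) * (A * S + S * B) * NormedSpace.exp (t • B)) t := by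
  refine (((hasDerivAt_exp_smul_const A t).mul_const S).mul
    (hasDerivAt_exp_smul_const' B t)).congr_deriv ?_
  noncomm_ring

theorem continuous_exp_smul_mul_mul_exp_smul (A B S : 𝔸) :
    Continuous fun t : ℝ => NormedSpace.exp (t • A) * S * NormedSpace.exp (t • B) :=
  continuous_iff_continuousAt.2 fun t =>
    (hasDerivAt_exp_smul_mul_mul_exp_smul A B S t).continuousAt

theorem integral_exp_smul_mul_mul_exp_smul (A B S : 𝔸) (a b : ℝ) :
    ∫ t in a..b, NormedSpace.exp (t • A) * (A * S + S * B) * NormedSpace.exp (t • B) =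
      NormedSpace.exp (b • A) * S * NormedSpace.exp (b • B) -
        NormedSpace.exp (a • A) * S * NormedSpace.exp (a • B) :=
  intervalIntegral.integral_eq_sub_of_hasDerivAt
    (fun t _ => hasDerivAt_exp_smul_mul_mul_exp_smul A B S t)
    ((continuous_exp_smul_mul_mul_exp_smul A B _).intervalIntegrable a b)

theorem ContinuousLinearMap.intervalIntegral_comp_exp_smul_mul_mul_exp_smul {E : Type*}
    [NormedAddCommGroup E] [NormedSpace ℝ E] [CompleteSpace E] (L : 𝔸 →L[ℝ] E) (A B S : 𝔸)
    (a b : ℝ) :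
    ∫ t in a..b, L (NormedSpace.exp (t • A) * (A * S + S * B) * NormedSpace.exp (t • B)) =
      L (NormedSpace.exp (b • A) * S * NormedSpace.exp (b • B)) -
        L (NormedSpace.exp (a • A) * S * NormedSpace.exp (a • B)) := by
  rw [L.intervalIntegral_comp_comm
      ((continuous_exp_smul_mul_mul_exp_smul A B _).intervalIntegrable a b),
    integral_exp_smul_mul_mul_exp_smul, map_sub]

end BanachAlgebra

theorem stmt15_general {n : Type*} [Fintype n] [DecidableEq n]
    (F S G : Matrix n n ℝ) (hLyap : F * S + S * Fᵀ + G = 0)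
    (Δ : ℝ) :
    (Matrix.of fun i j =>
        ∫ τ in (0 : ℝ)..Δ,
          (NormedSpace.exp ((Δ - τ) • F) * G * NormedSpace.exp ((Δ - τ) • Fᵀ)) i j) =
      S - NormedSpace.exp (Δ • F) * S * NormedSpace.exp (Δ • Fᵀ) := by
  -- Any submultiplicative norm makes the matrices a Banach algebra; neither `exp` nor the
  -- entrywise integrals depend on the choice. The lemmas are applied through the entry
  -- functional rather than to a matrix-valued integral, whose instances would not match.
  let _ := Matrix.linftyOpNormedRing (α := ℝ) (n := n)
  let _ := Matrix.linftyOpNormedAlgebra (R := ℝ) (α := ℝ) (n := n)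
  have hG : G = -(F * S + S * Fᵀ) := eq_neg_of_add_eq_zero_right hLyap
  ext i j
  have h := (Matrix.entryLinearMap ℝ ℝ i j).toContinuousLinearMap
    |>.intervalIntegral_comp_exp_smul_mul_mul_exp_smul F Fᵀ S 0 Δ
  rw [zero_smul, zero_smul, NormedSpace.exp_zero, one_mul, mul_one] at h
  rw [Matrix.of_apply, intervalIntegral.integral_comp_sub_left
      (fun u => (NormedSpace.exp (u • F) * G * NormedSpace.exp (u • Fᵀ)) i j),
    sub_self, sub_zero, hG]
  simp only [mul_neg, neg_mul, Matrix.neg_apply, intervalIntegral.integral_neg]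
  exact neg_eq_iff_eq_neg.2 (h.trans (neg_sub _ _).symm)

/-- **Process-noise covariance via the Lyapunov equation (Appendix D.2).**
If `FΣ + ΣFᵀ + G = 0`, then for every `Δ ≥ 0` the (entrywise) interval integral
`∫₀^Δ e^{(Δ−τ)F} G e^{(Δ−τ)Fᵀ} dτ` equals `Σ − e^{ΔF} Σ e^{ΔFᵀ}`. -/
theorem stmt15 {n : Type*} [Fintype n] [DecidableEq n]
    (F S G : Matrix n n ℝ) (hLyap : F * S + S * Fᵀ + G = 0)
    (Δ : ℝ) (hΔ : 0 ≤ Δ) :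
    (Matrix.of fun i j =>
        ∫ τ in (0 : ℝ)..Δ,
          (NormedSpace.exp ((Δ - τ) • F) * G * NormedSpace.exp ((Δ - τ) • Fᵀ)) i j) =
      S - NormedSpace.exp (Δ • F) * S * NormedSpace.exp (Δ • Fᵀ) :=
  stmt15_general F S G hLyap Δ
end

section
/- Let p : ℝ → (0, ∞) be a differentiable probability density with score s(y) := p'(y)/p(y), let w : ℝ → ℝ be differentiable, fix f ∈ ℝ and σ ≠ 0, and let s_f(y) := (f − y)/σ². Assume that (i) the function y ↦ w(y)²·s_f(y)·p(y) tends to 0 as y → +∞ and as y → −∞, and (ii) the functions y ↦ w(y)²·s_f(y)²·p(y), y ↦ w(y)²·s_f(y)·s(y)·p(y), y ↦ w(y)²·s(y)²·p(y), and y ↦ (d/dy)(w(y)²·s_f(y))·p(y) are all Lebesgue integrable on ℝ. Then ∫ w(y)²·(s_f(y) − s(y))²·p(y) dy = ∫ (w(y)²·s_f(y)² + 2·(d/dy)(w(y)²·s_f(y)))·p(y) dy + ∫ w(y)²·s(y)²·p(y) dy; that is, the weighted Fisher divergence between the Gaussian model score s_f and the data score s equals, up to an additive constant not depending on f, the weighted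 score-matching loss E[w² s_f² + 2 (w² s_f)']. -/
open MeasureTheory Filter Topology

/-! Writing `g = w² s_f`, the cross term of `∫ w² (s_f - s)² p` is `-2 ∫ g s p = -2 ∫ g p'`,
and integrating by parts against the vanishing boundary values of `g p` turns it into
`2 ∫ g' p`. -/

theorem integral_mul_score_mul_eq_neg_integral_deriv_mul {g p : ℝ → ℝ}
    (hp_ne : ∀ y, p y ≠ 0) (hp : Differentiable ℝ p) (hg : Differentiable ℝ g)
    (h_bot : Tendsto (fun y => g y * p y) atBot (𝓝 0))
    (h_top : Tendsto (fun y => g y * p y) atTop (𝓝 0))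
    (hgs : Integrable fun y => g y * (deriv p y / p y) * p y)
    (hg' : Integrable fun y => deriv g y * p y) :
    ∫ y, g y * (deriv p y / p y) * p y = -∫ y, deriv g y * p y := by
  have h_score : (fun y => g y * (deriv p y / p y) * p y) = fun y => g y * deriv p y := by
    funext y
    field_simp [hp_ne y]
  rw [h_score] at hgs ⊢
  simpa using integral_mul_deriv_eq_deriv_mul (fun x _ => (hg x).hasDerivAt)
    (fun x _ => (hp x).hasDerivAt) hgs hg' h_bot h_top

theorem integral_weighted_fisher_eq {p w sf : ℝ → ℝ}
    (hp_ne : ∀ y, p y ≠ 0) (hp : Differentiable ℝ p) (hw : Differentiable ℝ w)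
    (hsf : Differentiable ℝ sf)
    (h_bot : Tendsto (fun y => (w y) ^ 2 * sf y * p y) atBot (𝓝 0))
    (h_top : Tendsto (fun y => (w y) ^ 2 * sf y * p y) atTop (𝓝 0))
    (hi1 : Integrable fun y => (w y) ^ 2 * (sf y) ^ 2 * p y)
    (hi2 : Integrable fun y => (w y) ^ 2 * sf y * (deriv p y / p y) * p y)
    (hi3 : Integrable fun y => (w y) ^ 2 * (deriv p y / p y) ^ 2 * p y)
    (hi4 : Integrable fun y => deriv (fun t => (w t) ^ 2 * sf t) y * p y) :
    ∫ y, (w y) ^ 2 * (sf y - deriv p y / p y) ^ 2 * p y =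
      (∫ y, ((w y) ^ 2 * (sf y) ^ 2 + 2 * deriv (fun t => (w t) ^ 2 * sf t) y) * p y) +
        ∫ y, (w y) ^ 2 * (deriv p y / p y) ^ 2 * p y := by
  set s : ℝ → ℝ := fun y => deriv p y / p y
  set g : ℝ → ℝ := fun t => (w t) ^ 2 * sf t
  have h_cross : ∫ y, g y * s y * p y = -∫ y, deriv g y * p y :=
    integral_mul_score_mul_eq_neg_integral_deriv_mul hp_ne hp ((hw.pow 2).mul hsf)
      h_bot h_top hi2 hi4
  have hi12 : Integrable fun y => (w y) ^ 2 * (sf y) ^ 2 * p y - 2 * (g y * s y * p y) :=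
    hi1.sub (hi2.const_mul 2)
  calc ∫ y, (w y) ^ 2 * (sf y - s y) ^ 2 * p y
      = ∫ y, ((w y) ^ 2 * (sf y) ^ 2 * p y - 2 * (g y * s y * p y)) +
          (w y) ^ 2 * (s y) ^ 2 * p y := by
        congr 1 with y; ring
    _ = (∫ y, (w y) ^ 2 * (sf y) ^ 2 * p y) - 2 * (∫ y, g y * s y * p y) +
          ∫ y, (w y) ^ 2 * (s y) ^ 2 * p y := by
        rw [integral_add hi12 hi3, integral_sub hi1 (hi2.const_mul 2), integral_const_mul]
    _ = (∫ y, (w y) ^ 2 * (sf y) ^ 2 * p y + 2 * (deriv g y * p y)) +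
          ∫ y, (w y) ^ 2 * (s y) ^ 2 * p y := by
        rw [integral_add hi1 (hi4.const_mul 2), integral_const_mul, h_cross]
        ring
    _ = (∫ y, ((w y) ^ 2 * (sf y) ^ 2 + 2 * deriv g y) * p y) +
          ∫ y, (w y) ^ 2 * (s y) ^ 2 * p y := by
        congr 2 with y; ring

theorem stmt16_general (p : ℝ → ℝ) (hp_pos : ∀ y, 0 < p y) (hp_diff : Differentiable ℝ p)
    (w : ℝ → ℝ) (hw : Differentiable ℝ w)
    (f σ : ℝ)
    (s : ℝ → ℝ) (hs : s = fun y => deriv p y / p y)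
    (sf : ℝ → ℝ) (hsf : sf = fun y => (f - y) / σ ^ 2)
    (hdecay_top : Tendsto (fun y => (w y) ^ 2 * sf y * p y) atTop (nhds 0))
    (hdecay_bot : Tendsto (fun y => (w y) ^ 2 * sf y * p y) atBot (nhds 0))
    (hi1 : Integrable (fun y => (w y) ^ 2 * (sf y) ^ 2 * p y))
    (hi2 : Integrable (fun y => (w y) ^ 2 * sf y * s y * p y))
    (hi3 : Integrable (fun y => (w y) ^ 2 * (s y) ^ 2 * p y))
    (hi4 : Integrable (fun y => deriv (fun t => (w t) ^ 2 * sf t) y * p y)) :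
    ∫ y, (w y) ^ 2 * (sf y - s y) ^ 2 * p y =
      (∫ y, ((w y) ^ 2 * (sf y) ^ 2 + 2 * deriv (fun t => (w t) ^ 2 * sf t) y) * p y) +
        ∫ y, (w y) ^ 2 * (s y) ^ 2 * p y := by
  have hsf_diff : Differentiable ℝ sf := by
    rw [hsf]
    fun_prop
  subst hs
  exact integral_weighted_fisher_eq (fun y => (hp_pos y).ne') hp_diff hw hsf_diff
    hdecay_bot hdecay_top hi1 hi2 hi3 hi4

/-- **Weighted Fisher divergence equals the weighted score-matching loss up to a
constant (Appendix A).** For a differentiable positive density `p` with score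
`s = p'/p`, a differentiable weight `w`, and the Gaussian score `s_f(y) = (f−y)/σ²`,
under boundary decay of `w² s_f p` and integrability assumptions,
`∫ w²(s_f − s)² p = ∫ (w² s_f² + 2 (w² s_f)') p + ∫ w² s² p`. -/
theorem stmt16 (p : ℝ → ℝ) (hp_pos : ∀ y, 0 < p y) (hp_diff : Differentiable ℝ p)
    (hp_prob : ∫ y, p y = 1)
    (w : ℝ → ℝ) (hw : Differentiable ℝ w)
    (f σ : ℝ) (hσ : σ ≠ 0)
    (s : ℝ → ℝ) (hs : s = fun y => deriv p y / p y)
    (sf : ℝ → ℝ) (hsf : sf = fun y => (f - y) / σ ^ 2)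
    (hdecay_top : Tendsto (fun y => (w y) ^ 2 * sf y * p y) atTop (nhds 0))
    (hdecay_bot : Tendsto (fun y => (w y) ^ 2 * sf y * p y) atBot (nhds 0))
    (hi1 : Integrable (fun y => (w y) ^ 2 * (sf y) ^ 2 * p y))
    (hi2 : Integrable (fun y => (w y) ^ 2 * sf y * s y * p y))
    (hi3 : Integrable (fun y => (w y) ^ 2 * (s y) ^ 2 * p y))
    (hi4 : Integrable (fun y => deriv (fun t => (w t) ^ 2 * sf t) y * p y)) :
    ∫ y, (w y) ^ 2 * (sf y - s y) ^ 2 * p y =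
      (∫ y, ((w y) ^ 2 * (sf y) ^ 2 + 2 * deriv (fun t => (w t) ^ 2 * sf t) y) * p y) +
        ∫ y, (w y) ^ 2 * (s y) ^ 2 * p y :=
  stmt16_general p hp_pos hp_diff w hw f σ s hs sf hsf hdecay_top hdecay_bot hi1 hi2 hi3 hi4
end
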